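/- arXiv:math/0509538 — 3 statements merged into one kernel-verified Lean document; each statement's English description precedes it below -/
import Mathlib

section
/- Let V = Op[τ] where the symbol τ satisfies |∂_x^α τ(x,ξ)| ≤ B for |ξ| ≥ 1 and |α| ≤ n+1. Then for every N and every f ∈ L^2(T^n) with Fourier support in {|k| ≥ N}, and every frequency q with |q| < N/2, the q-th Fourier coefficient of V f satisfies |(V f)^(q)| ≤ C B N^{-1} ‖f‖_{L^2}, with C depending only on n. Consequently ‖P_M V (I − P_N)‖ ≤ C' B M^{n/2} N^{-1}. -/
open MeasureTheory Real

noncomputable section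

/-- Iterated partial derivative along a list of coordinate directions. -/
def pderivs {n : ℕ} {E : Type*} [NormedAddCommGroup E] [NormedSpace ℝ E] :
    List (Fin n) → ((Fin n → ℝ) → E) → ((Fin n → ℝ) → E)
  | [], f => f
  | i :: L, f => fun x => fderiv ℝ (pderivs L f) x (Pi.single i 1)

/-- Fourier coefficient in `x ∈ 𝕋ⁿ = [0,1]ⁿ` of a matrix symbol `τ(x,ξ)`. -/
def symbolCoeff {n d : ℕ}
    (τ : (Fin n → ℝ) → (Fin n → ℝ) → ((Fin d → ℂ) →L[ℂ] (Fin d → ℂ)))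
    (p : Fin n → ℤ) (ξ : Fin n → ℝ) : (Fin d → ℂ) →L[ℂ] (Fin d → ℂ) :=
  ∫ x in Set.Icc (0 : Fin n → ℝ) 1,
    Complex.exp (-(2 * π * Complex.I) * (∑ i, (p i : ℝ) * x i)) • τ x ξ

/-- Fourier coefficients of `V f = Op[τ] f`: `(V f)^(q) = ∑_{k ≠ 0} τ̂(q − k, k) f̂(k)`. -/
def opCoeff {n d : ℕ}
    (τ : (Fin n → ℝ) → (Fin n → ℝ) → ((Fin d → ℂ) →L[ℂ] (Fin d → ℂ)))
    (f : (Fin n → ℤ) → (Fin d → ℂ)) (q : Fin n → ℤ) : Fin d → ℂ :=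
  ∑' k : Fin n → ℤ, if k = 0 then 0 else
    (symbolCoeff τ (q - k) (fun i => (k i : ℝ))) (f k)

namespace Stmt8Aux

open Pointwise

/-! ### Calculus preliminaries -/

def unitVec {n : ℕ} (i : Fin n) : Fin n → ℝ := Pi.single i 1

variable {n : ℕ} {E F : Type*} [NormedAddCommGroup E] [NormedSpace ℝ E]
  [NormedAddCommGroup F] [NormedSpace ℝ F]

lemma fderiv_shift (f : F → E) (a x : F) :
    fderiv ℝ (fun y => f (y + a)) x = fderiv ℝ f (x + a) := by
  by_cases h : DifferentiableAt ℝ f (x + a)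
  · have h1 : HasFDerivAt (fun y : F => y + a) (ContinuousLinearMap.id ℝ F) x :=
      (hasFDerivAt_id x).add_const a
    have := (h.hasFDerivAt.comp x h1).fderiv
    simpa [Function.comp_def] using this
  · rw [fderiv_zero_of_not_differentiableAt h, fderiv_zero_of_not_differentiableAt]
    intro hd
    apply h
    have h3 : DifferentiableAt ℝ (fun y => f (y + a)) (x + a - a) := by
      simpa using hd
    have := h3.comp (x + a) ((differentiable_id.sub_const a).differentiableAt (x := x + a))
    simpa [Function.comp_def, sub_add_cancel] using this

lemma pderivs_shift (L : List (Fin n)) (f : (Fin n → ℝ) → E) (a : Fin n → ℝ) :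
    pderivs L (fun y => f (y + a)) = fun x => pderivs L f (x + a) := by
  induction L with
  | nil => rfl
  | cons i L ih =>
    funext x
    show fderiv ℝ (pderivs L fun y => f (y + a)) x (Pi.single i 1) = _
    rw [ih, fderiv_shift (pderivs L f) a x]
    rfl

lemma pderivs_contDiff (L : List (Fin n)) {f : (Fin n → ℝ) → E} (hf : ContDiff ℝ (⊤ : ℕ∞) f) :
    ContDiff ℝ (⊤ : ℕ∞) (pderivs L f) := by
  induction L with
  | nil => exact hf
  | cons i L ih =>
    exact (ih.fderiv_right (by simp)).clm_apply contDiff_const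

lemma pderivs_sub (L : List (Fin n)) {f g : (Fin n → ℝ) → E} (hf : ContDiff ℝ (⊤ : ℕ∞) f)
    (hg : ContDiff ℝ (⊤ : ℕ∞) g) :
    pderivs L (f - g) = pderivs L f - pderivs L g := by
  induction L with
  | nil => rfl
  | cons i L ih =>
    funext x
    show fderiv ℝ (pderivs L (f - g)) x (Pi.single i 1) = _
    rw [ih]
    have hdf := ((pderivs_contDiff L hf).differentiable (by simp)) x
    have hdg := ((pderivs_contDiff L hg).differentiable (by simp)) x
    have : fderiv ℝ (pderivs L f - pderivs L g) x
        = fderiv ℝ (pderivs L f) x - fderiv ℝ (pderivs L g) x := by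
      have h2 : (pderivs L f - pderivs L g) = fun y => pderivs L f y - pderivs L g y := rfl
      rw [h2, fderiv_fun_sub hdf hdg]
    rw [this]
    rfl

lemma line_hasDerivAt (u : (Fin n → ℝ) → E) (hu : Differentiable ℝ u) (x v : Fin n → ℝ)
    (t : ℝ) : HasDerivAt (fun s : ℝ => u (x + s • v)) (fderiv ℝ u (x + t • v) v) t := by
  have hline : HasDerivAt (fun s : ℝ => x + s • v) v t := by
    simpa using ((hasDerivAt_id t).smul_const v).const_add x
  exact (hu _).hasFDerivAt.comp_hasDerivAt t hline

lemma line_mvt_nonneg (u : (Fin n → ℝ) → E) (hu : Differentiable ℝ u) {A : ℝ}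
    (v : Fin n → ℝ) (hA : ∀ y, ‖fderiv ℝ u y v‖ ≤ A) (x : Fin n → ℝ) {c : ℝ} (hc : 0 ≤ c) :
    ‖u (x + c • v) - u x‖ ≤ c * A := by
  have := norm_image_sub_le_of_norm_deriv_le_segment'
    (f := fun s : ℝ => u (x + s • v)) (f' := fun s => fderiv ℝ u (x + s • v) v)
    (a := 0) (b := c) (C := A)
    (fun t _ => (line_hasDerivAt u hu x v t).hasDerivWithinAt)
    (fun t _ => hA _) c (Set.right_mem_Icc.2 hc)
  simpa [mul_comm] using this

lemma line_mvt (u : (Fin n → ℝ) → E) (hu : Differentiable ℝ u) {A : ℝ}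
    (v : Fin n → ℝ) (hA : ∀ y, ‖fderiv ℝ u y v‖ ≤ A) (x : Fin n → ℝ) (c : ℝ) :
    ‖u (x + c • v) - u x‖ ≤ |c| * A := by
  rcases le_or_gt 0 c with hc | hc
  · rw [abs_of_nonneg hc]; exact line_mvt_nonneg u hu v hA x hc
  · rw [abs_of_neg hc]
    have key := line_mvt_nonneg u hu v hA (x + c • v) (c := -c) (by linarith)
    have hxx : x + c • v + (-c) • v = x := by
      simp [add_assoc, ← add_smul]
    rw [hxx] at key
    rwa [norm_sub_rev]

def diffOp (h : Fin n → ℝ) (g : (Fin n → ℝ) → E) : (Fin n → ℝ) → E :=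
  fun x => g (x + h) - g x

lemma diffOp_contDiff (h : Fin n → ℝ) {g : (Fin n → ℝ) → E} (hg : ContDiff ℝ (⊤ : ℕ∞) g) :
    ContDiff ℝ (⊤ : ℕ∞) (diffOp h g) :=
  (hg.comp (contDiff_id.add contDiff_const)).sub hg

lemma pderivs_diffOp_bound (i : Fin n) (c : ℝ) (m : ℕ) {g : (Fin n → ℝ) → E} {A : ℝ}
    (hg : ContDiff ℝ (⊤ : ℕ∞) g)
    (hA : ∀ x, ‖pderivs (List.replicate (m + 1) i) g x‖ ≤ A) :
    ∀ y, ‖pderivs (List.replicate m i) (diffOp (c • unitVec i) g) y‖ ≤ |c| * A := by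
  intro y
  have hgs : ContDiff ℝ (⊤ : ℕ∞) (fun z => g (z + c • unitVec i)) :=
    hg.comp (contDiff_id.add contDiff_const)
  have h1 : diffOp (c • unitVec i) g
      = (fun z => g (z + c • unitVec i)) - g := rfl
  rw [h1, pderivs_sub _ hgs hg, pderivs_shift]
  have hu : Differentiable ℝ (pderivs (List.replicate m i) g) :=
    (pderivs_contDiff _ hg).differentiable (by simp)
  have hder : ∀ z, ‖fderiv ℝ (pderivs (List.replicate m i) g) z (Pi.single i 1)‖ ≤ A := by
    intro z
    have := hA z
    rwa [List.replicate_succ] at this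
  have := line_mvt (pderivs (List.replicate m i) g) hu (Pi.single i 1) hder y c
  simpa [unitVec] using this

/-! ### Translation invariance of the integral over the unit cube -/

lemma translate_integral (g : (Fin n → ℝ) → E)
    (hper : ∀ (x : Fin n → ℝ) (m : Fin n → ℤ), g (x + fun i => (m i : ℝ)) = g x)
    (h : Fin n → ℝ) :
    ∫ x in Set.Icc (0 : Fin n → ℝ) 1, g (x + h) = ∫ x in Set.Icc (0 : Fin n → ℝ) 1, g x := by
  classical
  set b := Pi.basisFun ℝ (Fin n) with hb
  set D := ZSpan.fundamentalDomain b with hDdef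
  set G := (Submodule.span ℤ (Set.range ⇑b)).toAddSubgroup with hG
  have hD : IsAddFundamentalDomain G D volume := ZSpan.isAddFundamentalDomain' b volume
  have hinv : ∀ (f : (Fin n → ℝ) → E)
      (_ : ∀ (x : Fin n → ℝ) (m : Fin n → ℤ), f (x + fun i => (m i : ℝ)) = f x)
      (γ : G) (x : Fin n → ℝ), f (γ +ᵥ x) = f x := by
    intro f hf γ x
    have hmem : (γ : Fin n → ℝ) ∈ Submodule.span ℤ (Set.range ⇑b) := γ.2
    rw [Module.Basis.mem_span_iff_repr_mem] at hmem
    choose m hm using hmem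
    have hγ : (γ : Fin n → ℝ) = fun i => (m i : ℝ) := by
      funext i
      have := hm i
      simpa [hb, Pi.basisFun_repr, algebraMap_int_eq] using this.symm
    have : γ +ᵥ x = x + fun i => (m i : ℝ) := by
      show (γ : Fin n → ℝ) + x = _
      rw [hγ, add_comm]
    rw [this, hf]
  have hDeq : D = Set.pi Set.univ fun _ => Set.Ico (0 : ℝ) 1 := by
    ext x
    simp [hDdef, ZSpan.fundamentalDomain, hb, Pi.basisFun_repr]
  have hIcc : Set.Icc (0 : Fin n → ℝ) 1 = Set.pi Set.univ fun _ => Set.Icc (0 : ℝ) 1 :=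
    (Set.pi_univ_Icc _ _).symm
  have hDIcc : D ⊆ Set.Icc (0 : Fin n → ℝ) 1 := by
    rw [hDeq, hIcc]
    exact Set.pi_mono fun i _ => Set.Ico_subset_Icc_self
  have hvolD : volume D = 1 := by
    rw [hDeq, volume_pi_pi]
    simp
  have hvolIcc : volume (Set.Icc (0 : Fin n → ℝ) 1) = 1 := by
    rw [hIcc, volume_pi_pi]
    simp
  have hnull : volume (Set.Icc (0 : Fin n → ℝ) 1 \ D) = 0 := by
    have hDm : NullMeasurableSet D volume :=
      (ZSpan.fundamentalDomain_measurableSet b).nullMeasurableSet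
    have h2 := measure_diff (μ := volume) hDIcc hDm (by simp [hvolD])
    rw [hvolD, hvolIcc] at h2
    simpa using h2
  have hae : (Set.Icc (0 : Fin n → ℝ) 1 : Set (Fin n → ℝ)) =ᵐ[volume] D := by
    rw [MeasureTheory.ae_eq_set]
    constructor
    · exact hnull
    · have : D \ Set.Icc (0 : Fin n → ℝ) 1 = ∅ := Set.diff_eq_empty.2 hDIcc
      simp [this]
  haveI : VAddCommClass (Fin n → ℝ) G (Fin n → ℝ) := by
    constructor
    intro a γ x
    show a + (↑γ + x) = ↑γ + (a + x)
    ring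
  haveI : Countable ↥G := inferInstanceAs (Countable (Submodule.span ℤ (Set.range ⇑b)))
  have hD2 : IsAddFundamentalDomain G (h +ᵥ D) volume := hD.vadd_of_comm h
  have hcv : ∫ x in D, g (x + h) = ∫ y in (h +ᵥ D), g y := by
    have e := measurePreserving_add_right (volume : Measure (Fin n → ℝ)) h
    have emb : MeasurableEmbedding (fun x : Fin n → ℝ => x + h) :=
      (MeasurableEquiv.addRight h).measurableEmbedding
    have hpre : (fun x : Fin n → ℝ => x + h) ⁻¹' (h +ᵥ D) = D := by
      ext z
      have hz : -h + (z + h) = z := by abel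
      simp [Set.mem_preimage, Set.mem_vadd_set_iff_neg_vadd_mem, vadd_eq_add, hz]
    have := e.setIntegral_preimage_emb emb g (h +ᵥ D)
    rw [hpre] at this
    exact this
  calc ∫ x in Set.Icc (0 : Fin n → ℝ) 1, g (x + h)
      = ∫ x in D, g (x + h) := setIntegral_congr_set hae
    _ = ∫ y in (h +ᵥ D), g y := hcv
    _ = ∫ y in D, g y := hD2.setIntegral_eq hD (hinv g hper)
    _ = ∫ x in Set.Icc (0 : Fin n → ℝ) 1, g x := (setIntegral_congr_set hae).symm

lemma volume_Icc01 : volume (Set.Icc (0 : Fin n → ℝ) 1) = 1 := by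
  rw [(Set.pi_univ_Icc (0 : Fin n → ℝ) 1).symm, volume_pi_pi]
  simp

/-! ### The phase and its properties -/

def phase {n : ℕ} (p : Fin n → ℤ) (x : Fin n → ℝ) : ℝ := ∑ i, (p i : ℝ) * x i

def eP {n : ℕ} (p : Fin n → ℤ) (x : Fin n → ℝ) : ℂ :=
  Complex.exp (-(2 * π * Complex.I) * (∑ i, (p i : ℝ) * x i))

lemma eP_eq (p : Fin n → ℤ) (x : Fin n → ℝ) :
    eP p x = Complex.exp (((-(2 * π * phase p x) : ℝ) : ℂ) * Complex.I) := by
  change Complex.exp (-(2 * (π : ℂ) * Complex.I) * ((phase p x : ℝ) : ℂ)) = _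
  congr 1
  push_cast
  ring

lemma norm_eP (p : Fin n → ℤ) (x : Fin n → ℝ) : ‖eP p x‖ = 1 := by
  rw [eP_eq, Complex.norm_exp_ofReal_mul_I]

lemma continuous_phase (p : Fin n → ℤ) : Continuous (phase p) := by
  apply continuous_finset_sum
  intro i _
  exact continuous_const.mul (continuous_apply i)

lemma continuous_eP (p : Fin n → ℤ) : Continuous (eP p) := by
  have : eP p = fun x => Complex.exp (((-(2 * π * phase p x) : ℝ) : ℂ) * Complex.I) := by
    funext x; exact eP_eq p x
  rw [this]
  exact Complex.continuous_exp.comp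
    ((Complex.continuous_ofReal.comp ((continuous_const.mul (continuous_phase p)).neg)).mul
      continuous_const)

lemma phase_add (p : Fin n → ℤ) (x y : Fin n → ℝ) :
    phase p (x + y) = phase p x + phase p y := by
  simp [phase, mul_add, Finset.sum_add_distrib]

lemma phase_int (p m : Fin n → ℤ) :
    phase p (fun i => (m i : ℝ)) = ((∑ i, p i * m i : ℤ) : ℝ) := by
  simp [phase]

lemma phase_unitVec (p : Fin n → ℤ) (i : Fin n) (c : ℝ) :
    phase p (c • unitVec i) = (p i : ℝ) * c := by
  simp [phase, unitVec, Pi.single_apply, mul_ite, mul_comm]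

lemma eP_periodic (p : Fin n → ℤ) (x : Fin n → ℝ) (m : Fin n → ℤ) :
    eP p (x + fun i => (m i : ℝ)) = eP p x := by
  rw [eP_eq, eP_eq, phase_add, phase_int]
  rw [show ((-(2 * π * (phase p x + ((∑ i, p i * m i : ℤ) : ℝ))) : ℝ) : ℂ) * Complex.I
      = ((-(2 * π * phase p x) : ℝ) : ℂ) * Complex.I
        + ((-(∑ i, p i * m i) : ℤ) : ℂ) * (2 * (π : ℂ) * Complex.I) by push_cast; ring]
  rw [Complex.exp_add, Complex.exp_int_mul_two_pi_mul_I, mul_one]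

lemma exp_neg_pi_I : Complex.exp (((-π : ℝ) : ℂ) * Complex.I) = -1 := by
  rw [Complex.ofReal_neg, neg_mul, Complex.exp_neg, Complex.exp_pi_mul_I]
  norm_num

lemma eP_half (p : Fin n → ℤ) (i : Fin n) (hpi : p i ≠ 0) (x : Fin n → ℝ) :
    eP p (x + (1 / (2 * (p i : ℝ))) • unitVec i) = -eP p x := by
  have hpi' : (p i : ℝ) ≠ 0 := Int.cast_ne_zero.2 hpi
  have h12 : phase p ((1 / (2 * (p i : ℝ))) • unitVec i) = 1 / 2 := by
    rw [phase_unitVec]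
    field_simp
  rw [eP_eq, eP_eq, phase_add, h12]
  rw [show ((-(2 * π * (phase p x + 1 / 2)) : ℝ) : ℂ) * Complex.I
      = ((-(2 * π * phase p x) : ℝ) : ℂ) * Complex.I + ((-π : ℝ) : ℂ) * Complex.I by
        push_cast; ring]
  rw [Complex.exp_add, exp_neg_pi_I, mul_neg_one]

/-! ### Decay of Fourier coefficients -/

section Decay

variable {E' : Type*} [NormedAddCommGroup E'] [NormedSpace ℝ E'] [NormedSpace ℂ E']

lemma T_decay (p : Fin n → ℤ) (i : Fin n) (hpi : p i ≠ 0) (m : ℕ) :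
    ∀ g : (Fin n → ℝ) → E', ContDiff ℝ (⊤ : ℕ∞) g →
      (∀ (x : Fin n → ℝ) (mm : Fin n → ℤ), g (x + fun j => (mm j : ℝ)) = g x) →
      ∀ {A : ℝ}, (∀ x, ‖pderivs (List.replicate m i) g x‖ ≤ A) →
      ‖∫ x in Set.Icc (0 : Fin n → ℝ) 1, eP p x • g x‖
        ≤ (|1 / (2 * (p i : ℝ))| / 2) ^ m * A := by
  induction m with
  | zero =>
    intro g hg hper A hA
    have key := norm_setIntegral_le_of_norm_le_const (μ := volume)
      (f := fun x => eP p x • g x) (s := Set.Icc (0 : Fin n → ℝ) 1) (C := A)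
      (by rw [volume_Icc01]; exact ENNReal.one_lt_top)
      (fun x _ => by
        show ‖eP p x • g x‖ ≤ A
        rw [norm_smul, norm_eP, one_mul]; exact hA x)
    rw [measureReal_def, volume_Icc01] at key
    simpa using key
  | succ m ih =>
    intro g hg hper A hA
    set c : ℝ := 1 / (2 * (p i : ℝ)) with hc
    set h : Fin n → ℝ := c • unitVec i with hh
    have hgs : Continuous fun x : Fin n → ℝ => g (x + h) :=
      hg.continuous.comp (continuous_id.add continuous_const)
    have hint1 : IntegrableOn (fun x => eP p x • g (x + h))
        (Set.Icc (0 : Fin n → ℝ) 1) volume :=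
      ((continuous_eP p).smul hgs).continuousOn.integrableOn_compact isCompact_Icc
    have hint2 : IntegrableOn (fun x => eP p x • g x)
        (Set.Icc (0 : Fin n → ℝ) 1) volume :=
      ((continuous_eP p).smul hg.continuous).continuousOn.integrableOn_compact isCompact_Icc
    have hshift : ∫ x in Set.Icc (0 : Fin n → ℝ) 1, eP p x • g (x + h)
        = -∫ x in Set.Icc (0 : Fin n → ℝ) 1, eP p x • g x := by
      have hFper : ∀ (x : Fin n → ℝ) (mm : Fin n → ℤ),
          eP p (x + fun j => (mm j : ℝ)) • g (x + fun j => (mm j : ℝ)) = eP p x • g x := by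
        intro x mm
        rw [eP_periodic, hper]
      have htr := translate_integral (fun y => eP p y • g y) hFper h
      have h2 : ∀ x : Fin n → ℝ, eP p (x + h) • g (x + h) = -(eP p x • g (x + h)) := by
        intro x
        rw [hh, hc, eP_half p i hpi x]
        exact neg_smul _ _
      simp only [h2] at htr
      rw [integral_neg] at htr
      rw [← htr, neg_neg]
    have hTD : ∫ x in Set.Icc (0 : Fin n → ℝ) 1, eP p x • diffOp h g x
        = -((2 : ℝ) • ∫ x in Set.Icc (0 : Fin n → ℝ) 1, eP p x • g x) := by
      have h3 : (fun x => eP p x • diffOp h g x)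
          = fun x => eP p x • g (x + h) - eP p x • g x := by
        funext x
        rw [diffOp, smul_sub]
      rw [h3, integral_sub hint1 hint2, hshift, two_smul ℝ]
      abel
    have hTg : ∫ x in Set.Icc (0 : Fin n → ℝ) 1, eP p x • g x
        = (-(1/2 : ℝ)) • ∫ x in Set.Icc (0 : Fin n → ℝ) 1, eP p x • diffOp h g x := by
      rw [hTD, smul_neg, smul_smul]
      norm_num [neg_smul]
    have hDper : ∀ (x : Fin n → ℝ) (mm : Fin n → ℤ),
        diffOp h g (x + fun j => (mm j : ℝ)) = diffOp h g x := by
      intro x mm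
      rw [diffOp, diffOp]
      have : (x + fun j => ((mm j : ℤ) : ℝ)) + h = (x + h) + fun j => ((mm j : ℤ) : ℝ) := by
        rw [add_right_comm]
      rw [this, hper, hper]
    have hbd := pderivs_diffOp_bound i c m hg hA
    have := ih (diffOp h g) (diffOp_contDiff h hg) hDper hbd
    rw [hTg, norm_smul]
    have hnorm : ‖(-(1/2 : ℝ))‖ = 1/2 := by
      rw [Real.norm_eq_abs]; norm_num
    rw [hnorm]
    calc 1/2 * ‖∫ x in Set.Icc (0 : Fin n → ℝ) 1, eP p x • diffOp h g x‖
        ≤ 1/2 * ((|c| / 2) ^ m * (|c| * A)) := by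
          apply mul_le_mul_of_nonneg_left this (by norm_num)
      _ = (|c| / 2) ^ (m + 1) * A := by ring

end Decay

/-! ### Norm bound for the symbol coefficients -/

lemma symbol_norm_bound {n d : ℕ}
    (τ : (Fin n → ℝ) → (Fin n → ℝ) → ((Fin d → ℂ) →L[ℂ] (Fin d → ℂ)))
    {B : ℝ} (hB : 0 ≤ B) (ξ : Fin n → ℝ)
    (hper : ∀ (x : Fin n → ℝ) (m : Fin n → ℤ), τ (x + fun i => (m i : ℝ)) ξ = τ x ξ)
    (hsm : ContDiff ℝ (⊤ : ℕ∞) (fun x => τ x ξ))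
    (hA : ∀ (i : Fin n) (x : Fin n → ℝ),
      ‖pderivs (List.replicate (n + 1) i) (fun y => τ y ξ) x‖ ≤ B)
    (p : Fin n → ℤ) (hp : p ≠ 0) :
    ‖symbolCoeff τ p ξ‖ ≤ B * ((‖(fun i => (p i : ℝ))‖ : ℝ) ^ (n + 1))⁻¹ := by
  obtain ⟨j, hj⟩ : ∃ j, p j ≠ 0 := by
    by_contra hco
    push_neg at hco
    exact hp (funext hco)
  obtain ⟨i, -, hmax⟩ := Finset.exists_max_image Finset.univ (fun j => |(p j : ℝ)|)
    ⟨j, Finset.mem_univ j⟩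
  have hji : |(p j : ℝ)| ≤ |(p i : ℝ)| := hmax j (Finset.mem_univ j)
  have hpj : (1 : ℝ) ≤ |(p j : ℝ)| := by
    have : (1 : ℤ) ≤ |p j| := Int.one_le_abs hj
    calc (1 : ℝ) ≤ ((|p j| : ℤ) : ℝ) := by exact_mod_cast this
      _ = |(p j : ℝ)| := by push_cast; ring
  have hpi : p i ≠ 0 := by
    intro h0
    rw [h0] at hji
    simp only [Int.cast_zero, abs_zero] at hji
    linarith
  have hpiR : (0 : ℝ) < |(p i : ℝ)| := by linarith
  have hnorm : (‖(fun i => (p i : ℝ))‖ : ℝ) = |(p i : ℝ)| := by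
    apply le_antisymm
    · apply (pi_norm_le_iff_of_nonneg (abs_nonneg _)).2
      intro j'
      rw [Real.norm_eq_abs]
      exact hmax j' (Finset.mem_univ j')
    · have := norm_le_pi_norm (fun i => (p i : ℝ)) i
      rwa [Real.norm_eq_abs] at this
  have key := T_decay p i hpi (n + 1) (fun x => τ x ξ) hsm (fun x mm => hper x mm) (hA i)
  have heq : symbolCoeff τ p ξ = ∫ x in Set.Icc (0 : Fin n → ℝ) 1, eP p x • τ x ξ := rfl
  rw [heq]
  refine key.trans ?_
  rw [hnorm]
  have hbase : |1 / (2 * (p i : ℝ))| / 2 = (4 * |(p i : ℝ)|)⁻¹ := by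
    rw [abs_div, abs_one, abs_mul, abs_two]
    field_simp
    ring
  rw [hbase]
  rw [mul_comm B]
  apply mul_le_mul_of_nonneg_right _ hB
  have h4 : |(p i : ℝ)| ≤ 4 * |(p i : ℝ)| := by linarith
  calc ((4 * |(p i : ℝ)|)⁻¹) ^ (n + 1) = ((4 * |(p i : ℝ)|) ^ (n + 1))⁻¹ := by
        rw [inv_pow]
    _ ≤ (|(p i : ℝ)| ^ (n + 1))⁻¹ := by
        apply inv_anti₀ (pow_pos hpiR _)
        exact pow_le_pow_left₀ hpiR.le h4 _

/-! ### Lattice sums -/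

def uf (z : ℤ) : ℝ := ((max 1 |(z : ℝ)|) ^ 2)⁻¹

lemma uf_nonneg (z : ℤ) : 0 ≤ uf z := by
  rw [uf]
  positivity

lemma uf_summable : Summable uf := by
  have h1 : Summable (fun k : ℕ => 1 / ((k : ℝ)) ^ 2) := by
    have := Real.summable_one_div_nat_pow (p := 2)
    exact this.2 (by norm_num)
  have h2 : Summable (fun k : ℕ => uf (k : ℤ)) := by
    rw [← summable_nat_add_iff 1]
    apply Summable.congr ((summable_nat_add_iff 1).2 h1)
    intro k
    have : |((k : ℝ) + 1)| = (k : ℝ) + 1 := abs_of_nonneg (by positivity)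
    simp only [uf]
    push_cast
    rw [this, max_eq_right (by linarith [Nat.cast_nonneg (α := ℝ) k] : (1:ℝ) ≤ (k:ℝ)+1)]
    rw [one_div]
  have h3 : Summable (fun k : ℕ => uf (-(k : ℤ))) := by
    apply Summable.congr h2
    intro k
    simp [uf]
  exact Summable.of_nat_of_neg h2 h3

def vf {n : ℕ} (p : Fin n → ℤ) : ℝ := ∏ i, uf (p i)

lemma vf_nonneg {n : ℕ} (p : Fin n → ℤ) : 0 ≤ vf p :=
  Finset.prod_nonneg fun i _ => uf_nonneg _

lemma vf_summable_tsum (n : ℕ) :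
    Summable (vf (n := n)) ∧ ∑' p : Fin n → ℤ, vf p = (∑' z : ℤ, uf z) ^ n := by
  induction n with
  | zero =>
    constructor
    · apply summable_of_finite_support
      exact Set.toFinite _
    · rw [pow_zero]
      rw [tsum_eq_single 0 (fun b hb => absurd (funext fun i : Fin 0 => absurd i.2 (by omega)) hb)]
      simp [vf]
  | succ m ih =>
    have habs : Summable fun z : ℤ => ‖uf z‖ := by
      apply uf_summable.congr
      intro z
      rw [Real.norm_eq_abs, abs_of_nonneg (uf_nonneg z)]
    have habsv : Summable fun p : Fin m → ℤ => ‖vf p‖ := by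
      apply ih.1.congr
      intro p
      rw [Real.norm_eq_abs, abs_of_nonneg (vf_nonneg p)]
    have hprod : Summable (fun x : ℤ × (Fin m → ℤ) => uf x.1 * vf x.2) :=
      summable_mul_of_summable_norm habs habsv
    have he : ∀ p : Fin (m+1) → ℤ, vf p = uf (p 0) * vf (fun i => p i.succ) := by
      intro p
      rw [vf, Fin.prod_univ_succ]
      rfl
    have hequiv : Summable (vf (n := m+1)) := by
      have := hprod.comp_injective (Fin.consEquiv (fun _ : Fin (m+1) => ℤ)).symm.injective
      apply this.congr
      intro p
      rw [he p]
      rfl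
    refine ⟨hequiv, ?_⟩
    have h1 : ∑' p : Fin (m+1) → ℤ, vf p
        = ∑' x : ℤ × (Fin m → ℤ), uf x.1 * vf x.2 := by
      rw [← (Fin.consEquiv (fun _ : Fin (m+1) => ℤ)).symm.tsum_eq (fun x : ℤ × (Fin m → ℤ) => uf x.1 * vf x.2)]
      apply tsum_congr
      intro p
      rw [he p]
      rfl
    rw [h1, ← Summable.tsum_mul_tsum uf_summable ih.1 hprod, ih.2, pow_succ]
    ring

lemma ufK_pos : 0 < ∑' z : ℤ, uf z := by
  have h0 : uf 0 = 1 := by simp [uf]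
  have := uf_summable.le_tsum 0 (fun j _ => uf_nonneg j)
  rw [h0] at this
  linarith

lemma lattice_pointwise {n : ℕ} (p : Fin n → ℤ) (hp : p ≠ 0) {R : ℝ} (hR : 0 < R)
    (hle : R ≤ ‖(fun i => (p i : ℝ))‖) :
    (((‖(fun i => (p i : ℝ))‖ : ℝ) ^ (n + 1))⁻¹) ^ 2 ≤ (R⁻¹) ^ 2 * vf p := by
  set t : ℝ := ‖(fun i => (p i : ℝ))‖ with ht
  obtain ⟨j, hj⟩ : ∃ j, p j ≠ 0 := by
    by_contra hco
    push_neg at hco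
    exact hp (funext hco)
  have hpj : (1 : ℝ) ≤ |(p j : ℝ)| := by
    have h1 : (1 : ℤ) ≤ |p j| := Int.one_le_abs hj
    calc (1 : ℝ) ≤ ((|p j| : ℤ) : ℝ) := by exact_mod_cast h1
      _ = |(p j : ℝ)| := by push_cast; ring
  have hjt : |(p j : ℝ)| ≤ t := by
    have := norm_le_pi_norm (fun i => (p i : ℝ)) j
    rwa [Real.norm_eq_abs] at this
  have ht1 : 1 ≤ t := le_trans hpj hjt
  have htpos : 0 < t := lt_of_lt_of_le one_pos ht1
  have hu : ∀ i, (t ^ 2)⁻¹ ≤ uf (p i) := by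
    intro i
    rw [uf]
    apply inv_anti₀ (by positivity)
    apply pow_le_pow_left₀ (le_trans zero_le_one (le_max_left _ _))
    apply max_le ht1
    have := norm_le_pi_norm (fun i => (p i : ℝ)) i
    rwa [Real.norm_eq_abs] at this
  have hv : ((t ^ 2)⁻¹) ^ n ≤ vf p := by
    rw [vf]
    calc ((t ^ 2)⁻¹) ^ n = ∏ _i : Fin n, (t ^ 2)⁻¹ := by
          rw [Finset.prod_const, Finset.card_univ, Fintype.card_fin]
      _ ≤ ∏ i, uf (p i) :=
          Finset.prod_le_prod (fun _ _ => by positivity) (fun i _ => hu i)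
  have hLHS : ((t ^ (n + 1))⁻¹) ^ 2 = (t ^ 2)⁻¹ * ((t ^ 2)⁻¹) ^ n := by
    rw [← inv_pow, ← inv_pow, ← pow_mul, ← pow_succ', ← pow_mul]
    ring_nf
  rw [hLHS]
  have h2 : (t ^ 2)⁻¹ ≤ (R⁻¹) ^ 2 := by
    rw [← inv_pow]
    apply pow_le_pow_left₀ (by positivity)
    exact inv_anti₀ hR hle
  exact mul_le_mul h2 hv (by positivity) (by positivity)

/-! ### The main coefficient estimate -/

lemma main_coeff_bound {n d : ℕ}
    (τ : (Fin n → ℝ) → (Fin n → ℝ) → ((Fin d → ℂ) →L[ℂ] (Fin d → ℂ)))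
    {B : ℝ} (hB : 0 < B)
    (hper : ∀ (x : Fin n → ℝ) (m : Fin n → ℤ) ξ, τ (x + fun i => (m i : ℝ)) ξ = τ x ξ)
    (hsm : ∀ ξ : Fin n → ℝ, ξ ≠ 0 → ContDiff ℝ (⊤ : ℕ∞) (fun x => τ x ξ))
    (hder : ∀ L : List (Fin n), L.length ≤ n + 1 →
      ∀ (x ξ : Fin n → ℝ), 1 ≤ ‖ξ‖ → ‖pderivs L (fun y => τ y ξ) x‖ ≤ B)
    {N : ℕ} (hN : 0 < N) (f : (Fin n → ℤ) → (Fin d → ℂ))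
    (hf2 : Summable (fun k => ‖f k‖ ^ 2))
    (hsupp : ∀ k : Fin n → ℤ, ‖(fun i => (k i : ℝ))‖ < (N : ℝ) → f k = 0)
    (q : Fin n → ℤ) (hq : 2 * ‖(fun i => (q i : ℝ))‖ < (N : ℝ)) :
    ‖opCoeff τ f q‖ ≤ (2 * Real.sqrt ((∑' z : ℤ, uf z) ^ n)) * B / N
      * Real.sqrt (∑' k, ‖f k‖ ^ 2) := by
  classical
  set K : ℝ := ∑' z : ℤ, uf z with hK
  have hKpos : 0 < K := ufK_pos
  set F : ℝ := Real.sqrt (∑' k, ‖f k‖ ^ 2) with hF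
  have hQ0 : 0 ≤ ∑' k, ‖f k‖ ^ 2 := tsum_nonneg (fun k => sq_nonneg _)
  have hF2 : F ^ 2 = ∑' k, ‖f k‖ ^ 2 := Real.sq_sqrt hQ0
  have hF0 : 0 ≤ F := Real.sqrt_nonneg _
  have hN1 : (1 : ℝ) ≤ (N : ℝ) := by exact_mod_cast hN
  have hNpos : (0 : ℝ) < (N : ℝ) := by linarith
  set R : ℝ := (N : ℝ) / 2 with hR
  have hRpos : 0 < R := by rw [hR]; linarith
  set w : (Fin n → ℤ) → ℝ := fun k =>
    if (N : ℝ) ≤ ‖(fun i => (k i : ℝ))‖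
    then ((‖(fun i => ((q - k) i : ℝ))‖ : ℝ) ^ (n + 1))⁻¹ else 0 with hwdef
  have hwnn : ∀ k, 0 ≤ w k := by
    intro k
    rw [hwdef]
    dsimp only
    split
    · positivity
    · exact le_refl 0
  -- geometry of the support
  have hlow : ∀ k : Fin n → ℤ, (N : ℝ) ≤ ‖(fun i => (k i : ℝ))‖ →
      R ≤ ‖(fun i => ((q - k) i : ℝ))‖ ∧ q - k ≠ 0 := by
    intro k hk
    have hvec : (fun i => ((q - k) i : ℝ)) =
        (fun i => (q i : ℝ)) - (fun i => (k i : ℝ)) := by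
      funext i
      show (((q i) - (k i) : ℤ) : ℝ) = _
      push_cast
      rfl
    have htri : ‖(fun i => (k i : ℝ))‖ - ‖(fun i => (q i : ℝ))‖
        ≤ ‖(fun i => ((q - k) i : ℝ))‖ := by
      rw [hvec, norm_sub_rev]
      exact norm_sub_norm_le _ _
    have hqhalf : ‖(fun i => (q i : ℝ))‖ < R := by rw [hR]; linarith
    have hRle : R ≤ ‖(fun i => ((q - k) i : ℝ))‖ := by
      have : (N : ℝ) - R = R := by rw [hR]; ring
      linarith
    refine ⟨hRle, fun h0 => ?_⟩
    rw [h0] at hRle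
    have : (fun i => (((0 : Fin n → ℤ)) i : ℝ)) = (0 : Fin n → ℝ) := by
      funext i; simp
    rw [this, norm_zero] at hRle
    linarith
  -- termwise estimate
  have hterm : ∀ k : Fin n → ℤ,
      ‖(if k = 0 then 0 else
        (symbolCoeff τ (q - k) (fun i => (k i : ℝ))) (f k) : Fin d → ℂ)‖
      ≤ B * (w k * ‖f k‖) := by
    intro k
    by_cases hk : (N : ℝ) ≤ ‖(fun i => (k i : ℝ))‖
    · have hk0 : k ≠ 0 := by
        intro h0
        rw [h0] at hk
        have : (fun i => (((0 : Fin n → ℤ)) i : ℝ)) = (0 : Fin n → ℝ) := by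
          funext i; simp
        rw [this, norm_zero] at hk
        linarith
      have hξ : (1 : ℝ) ≤ ‖(fun i => (k i : ℝ))‖ := le_trans hN1 hk
      have hξ0 : (fun i => (k i : ℝ)) ≠ 0 := by
        intro h0
        rw [h0, norm_zero] at hξ
        linarith
      obtain ⟨hRle, hqk0⟩ := hlow k hk
      rw [if_neg hk0]
      have hsb := symbol_norm_bound τ hB.le (fun i => (k i : ℝ))
        (fun x m => hper x m _) (hsm _ hξ0)
        (fun i x => hder (List.replicate (n + 1) i) (by rw [List.length_replicate]) x _ hξ)
        (q - k) hqk0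
      calc ‖(symbolCoeff τ (q - k) (fun i => (k i : ℝ))) (f k)‖
          ≤ ‖symbolCoeff τ (q - k) (fun i => (k i : ℝ))‖ * ‖f k‖ :=
            ContinuousLinearMap.le_opNorm _ _
        _ ≤ (B * ((‖(fun i => ((q - k) i : ℝ))‖ : ℝ) ^ (n + 1))⁻¹) * ‖f k‖ :=
            mul_le_mul_of_nonneg_right hsb (norm_nonneg _)
        _ = B * (w k * ‖f k‖) := by
            rw [hwdef]
            dsimp only
            rw [if_pos hk]
            ring
    · have hfk : f k = 0 := hsupp k (not_le.1 hk)
      have hwk : w k = 0 := by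
        rw [hwdef]
        dsimp only
        rw [if_neg hk]
      rw [hwk, hfk]
      rcases eq_or_ne k 0 with h0 | h0
      · rw [if_pos h0]
        simp
      · rw [if_neg h0]
        simp
  -- summability
  have hwsq : ∀ k, w k ^ 2 ≤ R⁻¹ ^ 2 * vf (q - k) := by
    intro k
    by_cases hk : (N : ℝ) ≤ ‖(fun i => (k i : ℝ))‖
    · obtain ⟨hRle, hqk0⟩ := hlow k hk
      have := lattice_pointwise (q - k) hqk0 hRpos hRle
      rw [hwdef]
      dsimp only
      rw [if_pos hk]
      exact this
    · rw [hwdef]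
      dsimp only
      rw [if_neg hk]
      have : (0:ℝ) ^ 2 = 0 := by norm_num
      rw [this]
      exact mul_nonneg (sq_nonneg _) (vf_nonneg _)
  have hvsum : Summable (fun k : Fin n → ℤ => vf (q - k)) := by
    have h1 := (Equiv.subLeft q).summable_iff (f := vf (n := n))
    exact h1.2 (vf_summable_tsum n).1
  have hw2sum : Summable (fun k => w k ^ 2) :=
    Summable.of_nonneg_of_le (fun k => sq_nonneg _) hwsq (hvsum.mul_left _)
  have hW : ∑' k, w k ^ 2 ≤ R⁻¹ ^ 2 * K ^ n := by
    have hsub : ∑' k : Fin n → ℤ, vf (q - k) = K ^ n := by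
      rw [← (vf_summable_tsum n).2, ← (Equiv.subLeft q).tsum_eq (f := vf (n := n))]
      rfl
    calc ∑' k, w k ^ 2 ≤ ∑' k, R⁻¹ ^ 2 * vf (q - k) :=
          Summable.tsum_le_tsum hwsq hw2sum (hvsum.mul_left _)
      _ = R⁻¹ ^ 2 * ∑' k, vf (q - k) := tsum_mul_left
      _ = R⁻¹ ^ 2 * K ^ n := by rw [hsub]
  have hwf : Summable (fun k => w k * ‖f k‖) := by
    apply Summable.of_nonneg_of_le (fun k => mul_nonneg (hwnn k) (norm_nonneg _))
      (fun k => ?_) ((hw2sum.add hf2).div_const 2)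
    nlinarith [sq_nonneg (w k - ‖f k‖)]
  have htsum : Summable (fun k : Fin n → ℤ =>
      ‖(if k = 0 then 0 else
        (symbolCoeff τ (q - k) (fun i => (k i : ℝ))) (f k) : Fin d → ℂ)‖) :=
    Summable.of_nonneg_of_le (fun k => norm_nonneg _) hterm (hwf.mul_left B)
  -- main chain
  have h1 : ‖opCoeff τ f q‖ ≤ B * ∑' k, w k * ‖f k‖ := by
    have hopc : opCoeff τ f q = ∑' k : Fin n → ℤ, (if k = 0 then 0 else
        (symbolCoeff τ (q - k) (fun i => (k i : ℝ))) (f k) : Fin d → ℂ) := rfl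
    rw [hopc]
    calc ‖∑' k : Fin n → ℤ, (if k = 0 then 0 else
          (symbolCoeff τ (q - k) (fun i => (k i : ℝ))) (f k) : Fin d → ℂ)‖
        ≤ ∑' k : Fin n → ℤ, ‖(if k = 0 then 0 else
          (symbolCoeff τ (q - k) (fun i => (k i : ℝ))) (f k) : Fin d → ℂ)‖ :=
          norm_tsum_le_tsum_norm htsum
      _ ≤ ∑' k, B * (w k * ‖f k‖) := Summable.tsum_le_tsum hterm htsum (hwf.mul_left B)
      _ = B * ∑' k, w k * ‖f k‖ := tsum_mul_left
  set G : ℝ := R⁻¹ * Real.sqrt (K ^ n) with hG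
  have hsqKn : 0 < Real.sqrt (K ^ n) := Real.sqrt_pos.2 (pow_pos hKpos n)
  have hGpos : 0 < G := mul_pos (inv_pos.2 hRpos) hsqKn
  have hG2 : R⁻¹ ^ 2 * K ^ n = G ^ 2 := by
    rw [hG, mul_pow, Real.sq_sqrt (pow_pos hKpos n).le]
  have hsum_wf : ∑' k, w k * ‖f k‖ ≤ G * F := by
    rcases eq_or_lt_of_le hF0 with hF0' | hFpos
    · have hQz : ∑' k, ‖f k‖ ^ 2 = 0 := by
        rw [← hF2, ← hF0']
        norm_num
      have hfk0 : ∀ k, f k = 0 := by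
        intro k
        have h5 := hf2.le_tsum k (fun j _ => sq_nonneg _)
        rw [hQz] at h5
        have h6 : ‖f k‖ ^ 2 = 0 := le_antisymm h5 (sq_nonneg _)
        have h7 : ‖f k‖ = 0 := by
          nlinarith [norm_nonneg (f k)]
        exact norm_eq_zero.1 h7
      have : ∀ k, w k * ‖f k‖ = 0 := by
        intro k
        rw [hfk0 k, norm_zero, mul_zero]
      rw [tsum_congr this, tsum_zero, ← hF0', mul_zero]
    · set x : ℝ := F / G with hx
      have hxpos : 0 < x := div_pos hFpos hGpos
      have hpt : ∀ k, w k * ‖f k‖ ≤ (x * w k ^ 2 + ‖f k‖ ^ 2 / x) / 2 := by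
        intro k
        have h7 : x * w k ^ 2 + ‖f k‖ ^ 2 / x - 2 * (w k * ‖f k‖)
            = (x * w k - ‖f k‖) ^ 2 / x := by
          field_simp
          ring
        have h8 : 0 ≤ (x * w k - ‖f k‖) ^ 2 / x :=
          div_nonneg (sq_nonneg _) hxpos.le
        linarith
      have hsum2 : Summable (fun k => (x * w k ^ 2 + ‖f k‖ ^ 2 / x) / 2) :=
        ((hw2sum.mul_left x).add (hf2.div_const x)).div_const 2
      calc ∑' k, w k * ‖f k‖
          ≤ ∑' k, (x * w k ^ 2 + ‖f k‖ ^ 2 / x) / 2 := Summable.tsum_le_tsum hpt hwf hsum2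
        _ = (x * ∑' k, w k ^ 2 + (∑' k, ‖f k‖ ^ 2) / x) / 2 := by
            rw [tsum_div_const, Summable.tsum_add (hw2sum.mul_left x) (hf2.div_const x),
              tsum_mul_left, tsum_div_const]
        _ ≤ (x * G ^ 2 + F ^ 2 / x) / 2 := by
            have h9 : x * ∑' k, w k ^ 2 ≤ x * G ^ 2 :=
              mul_le_mul_of_nonneg_left (hW.trans_eq hG2) hxpos.le
            have h10 : (∑' k, ‖f k‖ ^ 2) / x = F ^ 2 / x := by rw [← hF2]
            linarith
        _ = G * F := by
            rw [hx]
            field_simp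
            ring
  calc ‖opCoeff τ f q‖ ≤ B * ∑' k, w k * ‖f k‖ := h1
    _ ≤ B * (G * F) := mul_le_mul_of_nonneg_left hsum_wf hB.le
    _ = (2 * Real.sqrt (K ^ n)) * B / N * F := by
        rw [hG, hR]
        field_simp

end Stmt8Aux

/-- Let `V = Op[τ]` with `|∂_x^α τ(x,ξ)| ≤ B` for `|ξ| ≥ 1`, `|α| ≤ n+1`.
Then for every `N`, every `f ∈ L²(𝕋ⁿ; ℂᵈ)` with Fourier support in `{|k| ≥ N}` and every
frequency `q` with `|q| < N/2`, one has `|(V f)^(q)| ≤ C B N⁻¹ ‖f‖`, with `C = C(n,d)`;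
consequently (for `2M ≤ N`, the regime in which the estimate applies)
`‖P_M V (I − P_N)‖ ≤ C' B M^{n/2} N⁻¹`. -/
theorem op_low_frequency_coefficient_bound (n d : ℕ) :
    ∃ C C' : ℝ, 0 < C ∧ 0 < C' ∧
      ∀ (τ : (Fin n → ℝ) → (Fin n → ℝ) → ((Fin d → ℂ) →L[ℂ] (Fin d → ℂ))) (B : ℝ),
        0 < B →
        (∀ (x : Fin n → ℝ) (m : Fin n → ℤ) ξ, τ (x + fun i => (m i : ℝ)) ξ = τ x ξ) →
        (∀ ξ : Fin n → ℝ, ξ ≠ 0 → ContDiff ℝ (⊤ : ℕ∞) (fun x => τ x ξ)) →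
        (∀ L : List (Fin n), L.length ≤ n + 1 →
          ∀ (x ξ : Fin n → ℝ), 1 ≤ ‖ξ‖ → ‖pderivs L (fun y => τ y ξ) x‖ ≤ B) →
        ∀ (N : ℕ), 0 < N → ∀ f : (Fin n → ℤ) → (Fin d → ℂ),
          Summable (fun k => ‖f k‖ ^ 2) →
          (∀ k : Fin n → ℤ, ‖(fun i => (k i : ℝ))‖ < (N : ℝ) → f k = 0) →
          ((∀ q : Fin n → ℤ, 2 * ‖(fun i => (q i : ℝ))‖ < (N : ℝ) →
              ‖opCoeff τ f q‖ ≤ C * B / N * Real.sqrt (∑' k, ‖f k‖ ^ 2)) ∧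
            ∀ M : ℕ, 0 < M → 2 * M ≤ N →
              (∑' q : Fin n → ℤ,
                  (if ‖(fun i => (q i : ℝ))‖ < (M : ℝ) then ‖opCoeff τ f q‖ ^ 2 else 0))
                ≤ (C' * B * (M : ℝ) ^ ((n : ℝ) / 2) / N) ^ 2 * ∑' k, ‖f k‖ ^ 2) := by
  classical
  set K : ℝ := ∑' z : ℤ, Stmt8Aux.uf z with hK
  have hKpos : 0 < K := Stmt8Aux.ufK_pos
  set C : ℝ := 2 * Real.sqrt (K ^ n) with hC
  set C' : ℝ := C * Real.sqrt (3 ^ n) with hC'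
  have hsqKn : 0 < Real.sqrt (K ^ n) := Real.sqrt_pos.2 (pow_pos hKpos n)
  have hCpos : 0 < C := by rw [hC]; positivity
  have hC'pos : 0 < C' := by
    rw [hC']
    have : (0:ℝ) < Real.sqrt (3 ^ n) := Real.sqrt_pos.2 (by positivity)
    positivity
  refine ⟨C, C', hCpos, hC'pos, ?_⟩
  intro τ B hB hper hsm hder N hN f hf2 hsupp
  have part1 : ∀ q : Fin n → ℤ, 2 * ‖(fun i => (q i : ℝ))‖ < (N : ℝ) →
      ‖opCoeff τ f q‖ ≤ C * B / N * Real.sqrt (∑' k, ‖f k‖ ^ 2) := by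
    intro q hq
    exact Stmt8Aux.main_coeff_bound τ hB hper hsm hder hN f hf2 hsupp q hq
  refine ⟨part1, ?_⟩
  intro M hM hMN
  set F : ℝ := Real.sqrt (∑' k, ‖f k‖ ^ 2) with hF
  have hQ0 : 0 ≤ ∑' k, ‖f k‖ ^ 2 := tsum_nonneg (fun k => sq_nonneg _)
  have hF2 : F ^ 2 = ∑' k, ‖f k‖ ^ 2 := Real.sq_sqrt hQ0
  have hN1 : (1 : ℝ) ≤ (N : ℝ) := by exact_mod_cast hN
  have hNpos : (0 : ℝ) < (N : ℝ) := by linarith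
  have hM1 : (1 : ℝ) ≤ (M : ℝ) := by exact_mod_cast hM
  have hMN' : (2 : ℝ) * (M : ℝ) ≤ (N : ℝ) := by exact_mod_cast hMN
  set S : Finset (Fin n → ℤ) :=
    Fintype.piFinset (fun _ : Fin n => Finset.Icc (-(M : ℤ)) (M : ℤ)) with hS
  have hzero : ∀ q ∉ S,
      (if ‖(fun i => (q i : ℝ))‖ < (M : ℝ) then ‖opCoeff τ f q‖ ^ 2 else 0) = 0 := by
    intro q hq
    rw [if_neg]
    intro hlt
    apply hq
    rw [hS, Fintype.mem_piFinset]
    intro i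
    rw [Finset.mem_Icc]
    have h1 : |(q i : ℝ)| ≤ ‖(fun i => (q i : ℝ))‖ := by
      have := norm_le_pi_norm (fun i => (q i : ℝ)) i
      rwa [Real.norm_eq_abs] at this
    have h2 : |(q i : ℝ)| < (M : ℝ) := lt_of_le_of_lt h1 hlt
    have h3 : |q i| ≤ (M : ℤ) := by
      have h2' : |(q i : ℝ)| ≤ (M : ℝ) := h2.le
      exact_mod_cast h2'
    constructor
    · linarith [neg_abs_le (q i), abs_nonneg (q i)]
    · linarith [le_abs_self (q i)]
  rw [tsum_eq_sum hzero]
  have hbound : ∀ q ∈ S,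
      (if ‖(fun i => (q i : ℝ))‖ < (M : ℝ) then ‖opCoeff τ f q‖ ^ 2 else 0)
        ≤ (C * B / N * F) ^ 2 := by
    intro q _
    split
    · next hlt =>
      have hq : 2 * ‖(fun i => (q i : ℝ))‖ < (N : ℝ) := by linarith
      exact pow_le_pow_left₀ (norm_nonneg _) (part1 q hq) 2
    · positivity
  have hcard : (S.card : ℝ) = ((2 * M + 1 : ℕ) : ℝ) ^ n := by
    rw [hS, Fintype.card_piFinset]
    have h1 : ∀ _i : Fin n, (Finset.Icc (-(M : ℤ)) (M : ℤ)).card = 2 * M + 1 := by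
      intro i
      rw [Int.card_Icc]
      have : (M : ℤ) + 1 - -(M : ℤ) = ((2 * M + 1 : ℕ) : ℤ) := by push_cast; ring
      rw [this, Int.toNat_natCast]
    rw [Finset.prod_congr rfl (fun i _ => h1 i), Finset.prod_const, Finset.card_univ,
      Fintype.card_fin]
    push_cast
    ring
  calc ∑ q ∈ S, (if ‖(fun i => (q i : ℝ))‖ < (M : ℝ) then ‖opCoeff τ f q‖ ^ 2 else 0)
      ≤ S.card • ((C * B / N * F) ^ 2) := Finset.sum_le_card_nsmul S _ _ hbound
    _ = (S.card : ℝ) * (C * B / N * F) ^ 2 := by rw [nsmul_eq_mul]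
    _ ≤ 3 ^ n * (M : ℝ) ^ n * (C * B / N * F) ^ 2 := by
        apply mul_le_mul_of_nonneg_right _ (by positivity)
        rw [hcard]
        calc ((2 * M + 1 : ℕ) : ℝ) ^ n ≤ (3 * (M : ℝ)) ^ n := by
              apply pow_le_pow_left₀ (by positivity)
              push_cast
              linarith
          _ = 3 ^ n * (M : ℝ) ^ n := by rw [mul_pow]
    _ = (C' * B * (M : ℝ) ^ ((n : ℝ) / 2) / N) ^ 2 * ∑' k, ‖f k‖ ^ 2 := by
        rw [← hF2]
        have hrpow : ((M : ℝ) ^ ((n : ℝ) / 2)) ^ 2 = (M : ℝ) ^ n := by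
          rw [← Real.rpow_natCast ((M : ℝ) ^ ((n : ℝ) / 2)) 2,
            ← Real.rpow_mul (by positivity : (0:ℝ) ≤ (M:ℝ))]
          rw [show ((n : ℝ) / 2 * (2 : ℕ)) = (n : ℝ) by push_cast; ring]
          rw [Real.rpow_natCast]
        have hC'2 : C' ^ 2 = C ^ 2 * 3 ^ n := by
          rw [hC', mul_pow, Real.sq_sqrt (by positivity : (0:ℝ) ≤ (3:ℝ) ^ n)]
        have e1 : (C' * B * (M : ℝ) ^ ((n : ℝ) / 2) / N) ^ 2 * F ^ 2
            = C' ^ 2 * ((M : ℝ) ^ ((n : ℝ) / 2)) ^ 2 * (B / N) ^ 2 * F ^ 2 := by ring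
        rw [e1, hC'2, hrpow]
        ring


end
end

section
/- Let H be a Hilbert space, P a finite-rank orthogonal projection, and G = G⁻ + G⁺ bounded operators with G⁺ = G⁺ P (i.e. G⁺ factors through ran P) and ‖G⁻‖ < |z|. Then z is an eigenvalue of G with eigenvector f if and only if, writing f' = P f and f'' = (I − P) f, the pair (f', f'') satisfies: [P + P (G⁻ − z)^{-1} G⁺ P] f' = 0 and f'' = −(I − P)(G⁻ − z)^{-1} G⁺ P f'. In particular z is an eigenvalue of G iff the finite-dimensional operator P + P(G⁻ − z)^{-1} G⁺ P on ran P is not injective. -/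
/-- Let `H` be a Hilbert space, `P` a finite-rank orthogonal projection,
`G = G⁻ + G⁺` bounded with `G⁺ = G⁺ P` and `‖G⁻‖ < |z|` (so `G⁻ − z` is invertible, with
inverse `R`).  Then `G f = z f` iff, with `f' = P f`, `f'' = (I − P) f`:
`[P + P R G⁺ P] f' = 0` and `f'' = −(I − P) R G⁺ P f'`.  In particular `z` is an eigenvalue
of `G` iff the finite-dimensional operator `P + P R G⁺ P` is not injective on `ran P`. -/
theorem eigenvalue_reduction_finite_dimensional
    {H : Type*} [NormedAddCommGroup H] [InnerProductSpace ℂ H] [CompleteSpace H]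
    (P Gm Gp R : H →L[ℂ] H) (z : ℂ)
    (hPproj : P ∘L P = P) (hPsa : IsSelfAdjoint P)
    (hPfin : FiniteDimensional ℂ (LinearMap.range (P : H →ₗ[ℂ] H)))
    (hGpP : Gp ∘L P = Gp)
    (hGm : ‖Gm‖ < ‖z‖)
    (hR₁ : R ∘L (Gm - z • (1 : H →L[ℂ] H)) = 1)
    (hR₂ : (Gm - z • (1 : H →L[ℂ] H)) ∘L R = 1) :
    (∀ f : H, ((Gm + Gp) f = z • f ↔
        ((P + P ∘L R ∘L Gp ∘L P) (P f) = 0 ∧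
          (1 - P) f = -(((1 - P) ∘L R ∘L Gp ∘L P) (P f))))) ∧
    ((∃ f : H, f ≠ 0 ∧ (Gm + Gp) f = z • f) ↔
      (∃ g ∈ LinearMap.range (P : H →ₗ[ℂ] H), g ≠ 0 ∧ (P + P ∘L R ∘L Gp ∘L P) g = 0)) := by
  have hPf : ∀ x : H, P (P x) = P x := fun x => by
    simpa using DFunLike.congr_fun hPproj x
  have hGpf : ∀ x : H, Gp (P x) = Gp x := fun x => by
    simpa using DFunLike.congr_fun hGpP x
  have hR2f : ∀ x : H, (Gm - z • (1 : H →L[ℂ] H)) (R x) = x := fun x => by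
    simpa using DFunLike.congr_fun hR₂ x
  have hR1f : ∀ x : H, R ((Gm - z • (1 : H →L[ℂ] H)) x) = x := fun x => by
    simpa using DFunLike.congr_fun hR₁ x
  -- main pointwise equivalence
  have main : ∀ f : H, (Gm + Gp) f = z • f ↔ f = -(R (Gp f)) := by
    intro f
    constructor
    · intro h
      have h' : Gm f + Gp f = z • f := by
        simpa [ContinuousLinearMap.add_apply] using h
      have h1 : (Gm - z • (1 : H →L[ℂ] H)) f = -(Gp f) := by
        simp only [ContinuousLinearMap.sub_apply, ContinuousLinearMap.smul_apply,
          ContinuousLinearMap.one_apply]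
        rw [← h']; abel
      have h2 := hR1f f
      rw [h1, map_neg] at h2
      exact h2.symm
    · intro hf
      have h1 : (Gm - z • (1 : H →L[ℂ] H)) f = -(Gp f) := by
        conv_lhs => rw [hf]
        rw [map_neg, hR2f]
      have h2 : Gm f - z • f = -(Gp f) := by
        simpa [ContinuousLinearMap.sub_apply, ContinuousLinearMap.smul_apply,
          ContinuousLinearMap.one_apply] using h1
      have h3 : Gm f = -(Gp f) + z • f := sub_eq_iff_eq_add.mp h2
      simp only [ContinuousLinearMap.add_apply]
      rw [h3]; abel
  have part1 : ∀ f : H, ((Gm + Gp) f = z • f ↔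
      ((P + P ∘L R ∘L Gp ∘L P) (P f) = 0 ∧
        (1 - P) f = -(((1 - P) ∘L R ∘L Gp ∘L P) (P f)))) := by
    intro f
    rw [main f]
    constructor
    · intro hf
      have hRf : R (Gp f) = -f := by conv_rhs => rw [hf, neg_neg]
      constructor
      · simp only [ContinuousLinearMap.add_apply, ContinuousLinearMap.comp_apply,
          hPf, hGpf, hRf, map_neg]
        abel
      · simp only [ContinuousLinearMap.sub_apply, ContinuousLinearMap.comp_apply,
          ContinuousLinearMap.one_apply, hPf, hGpf, hRf, map_neg]
        abel
    · rintro ⟨h1, h2⟩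
      simp only [ContinuousLinearMap.add_apply, ContinuousLinearMap.comp_apply,
        hPf, hGpf] at h1
      simp only [ContinuousLinearMap.sub_apply, ContinuousLinearMap.comp_apply,
        ContinuousLinearMap.one_apply, hPf, hGpf] at h2
      have key : f + R (Gp f) =
          (P f + P (R (Gp f))) + ((f - P f) + (R (Gp f) - P (R (Gp f)))) := by abel
      rw [h1, h2] at key
      simp only [zero_add, neg_add_cancel] at key
      exact eq_neg_of_add_eq_zero_left key
  refine ⟨part1, ?_, ?_⟩
  · rintro ⟨f, hf0, hf⟩
    refine ⟨P f, ⟨f, rfl⟩, ?_, ((part1 f).mp hf).1⟩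
    intro hPf0
    apply hf0
    have hfe := (main f).mp hf
    rw [← hGpf f, hPf0] at hfe
    simpa using hfe
  · rintro ⟨g, ⟨x, hx⟩, hg0, hg⟩
    have hPg : P g = g := by rw [← hx]; exact hPf x
    have hg' : g + P (R (Gp g)) = 0 := by
      simpa [ContinuousLinearMap.add_apply, ContinuousLinearMap.comp_apply,
        hGpf, hPg] using hg
    have hPs : P (R (Gp g)) = -g := eq_neg_of_add_eq_zero_right hg'
    refine ⟨-(R (Gp g)), ?_, (main _).mpr ?_⟩
    · intro h0
      apply hg0
      have h1 : R (Gp g) = 0 := neg_eq_zero.mp h0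
      rw [h1, map_zero, add_zero] at hg'
      exact hg'
    · have hPf' : P (-(R (Gp g))) = g := by rw [map_neg, hPs, neg_neg]
      have hGpeq : Gp (-(R (Gp g))) = Gp g := by
        calc Gp (-(R (Gp g))) = Gp (P (-(R (Gp g)))) := (hGpf _).symm
          _ = Gp g := by rw [hPf']
      rw [hGpeq]
end

section
/- Let L^ε generate C_0-semigroups G_t^ε on a Banach space, and suppose that for some t > 0 and some ζ with e^{ζt} ∉ σ(G_t^ε), the resolvent identity (L^ε − ζI)^{-1} = (G_t^ε − e^{ζt} I)^{-1} ∫_0^t e^{ζ(t−s)} G_s^ε ds holds. If (G_t^ε − e^{ζt}I)^{-1} → (G_t^0 − e^{ζt}I)^{-1} strongly with uniformly bounded norms, and G_s^ε → G_s^0 strongly uniformly for s ∈ [0,t] with uniform bound, then (L^ε − ζI)^{-1} → (L^0 − ζI)^{-1} in the strong operator topology. -/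
open Filter Topology

/-- Let `L^ε` generate `C₀`-semigroups `G_s^ε` and suppose the resolvent
identity `(L^ε − ζ)⁻¹ = (G_t^ε − e^{ζt})⁻¹ ∫₀ᵗ e^{ζ(t−s)} G_s^ε ds` holds for some `t > 0`
and some `ζ` with `e^{ζt} ∉ σ(G_t^ε)`.  If `(G_t^ε − e^{ζt})⁻¹ → (G_t^0 − e^{ζt})⁻¹`
strongly with uniformly bounded norms, and `G_s^ε → G_s^0` strongly, uniformly for
`s ∈ [0,t]`, with a uniform bound, then `(L^ε − ζ)⁻¹ → (L^0 − ζ)⁻¹` strongly as `ε → 0⁺`. -/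
theorem generator_resolvent_strong_convergence
    {X : Type*} [NormedAddCommGroup X] [NormedSpace ℂ X] [CompleteSpace X]
    (ε₀ t : ℝ) (hε₀ : 0 < ε₀) (ht : 0 < t) (ζ : ℂ)
    (G : ℝ → ℝ → (X →L[ℂ] X))   -- `G ε s = G_s^ε = e^{s L^ε}`
    (Rt : ℝ → (X →L[ℂ] X))      -- `Rt ε = (G_t^ε − e^{ζt} I)⁻¹`
    (RL : ℝ → (X →L[ℂ] X))      -- `RL ε = (L^ε − ζ I)⁻¹`
    (hsg : ∀ ε (x : X), Continuous fun s => G ε s x)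
    (hRt : ∀ ε ∈ Set.Ico (0 : ℝ) ε₀,
      Rt ε ∘L (G ε t - Complex.exp (ζ * t) • (1 : X →L[ℂ] X)) = 1 ∧
      (G ε t - Complex.exp (ζ * t) • (1 : X →L[ℂ] X)) ∘L Rt ε = 1)
    (hRL : ∀ ε ∈ Set.Ico (0 : ℝ) ε₀, ∀ x : X,
      RL ε x = Rt ε (∫ s in (0 : ℝ)..t, Complex.exp (ζ * (t - s)) • G ε s x))
    (hGbd : ∃ M : ℝ, ∀ ε ∈ Set.Ico (0 : ℝ) ε₀, ∀ s ∈ Set.Icc (0 : ℝ) t, ‖G ε s‖ ≤ M)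
    (hGconv : ∀ x : X,
      TendstoUniformlyOn (fun ε s => G ε s x) (fun s => G 0 s x)
        (nhdsWithin 0 (Set.Ioo 0 ε₀)) (Set.Icc 0 t))
    (hRtbd : ∃ M : ℝ, ∀ ε ∈ Set.Ico (0 : ℝ) ε₀, ‖Rt ε‖ ≤ M)
    (hRtconv : ∀ x : X,
      Tendsto (fun ε => Rt ε x) (nhdsWithin 0 (Set.Ioo 0 ε₀)) (nhds (Rt 0 x))) :
    ∀ x : X, Tendsto (fun ε => RL ε x) (nhdsWithin 0 (Set.Ioo 0 ε₀)) (nhds (RL 0 x)) := by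
  obtain ⟨M, hM⟩ := hRtbd
  intro x
  set f : ℝ → ℝ → X := fun ε s => Complex.exp (ζ * (t - s)) • G ε s x with hfdef
  set y : ℝ → X := fun ε => ∫ s in (0 : ℝ)..t, f ε s with hydef
  have hcont : ∀ ε, Continuous (f ε) := by
    intro ε
    exact (Complex.continuous_exp.comp (by continuity)).smul (hsg ε x)
  have hint : ∀ ε, IntervalIntegrable (f ε) MeasureTheory.volume 0 t := fun ε =>
    (hcont ε).intervalIntegrable 0 t
  set C : ℝ := Real.exp (|ζ.re| * t) with hCdef
  have hCpos : 0 < C := Real.exp_pos _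
  have hexp_bound : ∀ s ∈ Set.Icc (0 : ℝ) t, ‖Complex.exp (ζ * (t - s))‖ ≤ C := by
    intro s hs
    rw [Complex.norm_exp]
    apply Real.exp_le_exp.mpr
    have h1 : (ζ * (↑t - ↑s)).re = ζ.re * (t - s) := by simp [Complex.mul_re]
    rw [h1]
    have h2 : ζ.re * (t - s) ≤ |ζ.re| * (t - s) :=
      mul_le_mul_of_nonneg_right (le_abs_self _) (by linarith [hs.2])
    have h3 : |ζ.re| * (t - s) ≤ |ζ.re| * t :=
      mul_le_mul_of_nonneg_left (by linarith [hs.1]) (abs_nonneg _)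
    linarith
  have hyconv : Tendsto y (nhdsWithin 0 (Set.Ioo 0 ε₀)) (nhds (y 0)) := by
    rw [Metric.tendsto_nhds]
    intro δ hδ
    have hδ' : 0 < δ / (C * t + 1) := by positivity
    filter_upwards [(Metric.tendstoUniformlyOn_iff.mp (hGconv x)) _ hδ'] with ε hε
    have hnorm : ∀ s ∈ Set.uIoc (0 : ℝ) t, ‖f ε s - f 0 s‖ ≤ C * (δ / (C * t + 1)) := by
      intro s hs
      rw [Set.uIoc_of_le ht.le] at hs
      have hs' : s ∈ Set.Icc (0 : ℝ) t := ⟨hs.1.le, hs.2⟩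
      have hd := hε s hs'
      rw [dist_comm, dist_eq_norm] at hd
      calc ‖f ε s - f 0 s‖ = ‖Complex.exp (ζ * (t - s))‖ * ‖G ε s x - G 0 s x‖ := by
            simp only [hfdef, ← smul_sub, norm_smul]
        _ ≤ C * (δ / (C * t + 1)) :=
            mul_le_mul (hexp_bound s hs') hd.le (norm_nonneg _) hCpos.le
    have h1 : ‖y ε - y 0‖ ≤ C * (δ / (C * t + 1)) * |t - 0| := by
      simp only [hydef]
      rw [← intervalIntegral.integral_sub (hint ε) (hint 0)]
      exact intervalIntegral.norm_integral_le_of_norm_le_const hnorm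
    rw [dist_eq_norm]
    have habs : |t - 0| = t := by rw [sub_zero, abs_of_pos ht]
    rw [habs] at h1
    have hlt : C * (δ / (C * t + 1)) * t < δ := by
      have heq : C * (δ / (C * t + 1)) * t = δ * (C * t) / (C * t + 1) := by ring
      rw [heq, div_lt_iff₀ (by positivity)]
      nlinarith
    linarith
  have key : Tendsto (fun ε => Rt ε (y ε)) (nhdsWithin 0 (Set.Ioo 0 ε₀))
      (nhds (Rt 0 (y 0))) := by
    rw [tendsto_iff_norm_sub_tendsto_zero]
    have hb : ∀ᶠ ε in nhdsWithin 0 (Set.Ioo 0 ε₀),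
        ‖Rt ε (y ε) - Rt 0 (y 0)‖ ≤
          max M 0 * ‖y ε - y 0‖ + ‖Rt ε (y 0) - Rt 0 (y 0)‖ := by
      filter_upwards [self_mem_nhdsWithin] with ε hε
      have hεI : ε ∈ Set.Ico (0 : ℝ) ε₀ := ⟨hε.1.le, hε.2⟩
      calc ‖Rt ε (y ε) - Rt 0 (y 0)‖
          = ‖Rt ε (y ε - y 0) + (Rt ε (y 0) - Rt 0 (y 0))‖ := by
            rw [map_sub]; congr 1; abel
        _ ≤ ‖Rt ε (y ε - y 0)‖ + ‖Rt ε (y 0) - Rt 0 (y 0)‖ := norm_add_le _ _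
        _ ≤ max M 0 * ‖y ε - y 0‖ + ‖Rt ε (y 0) - Rt 0 (y 0)‖ := by
            have := (Rt ε).le_opNorm (y ε - y 0)
            have h2 : ‖Rt ε‖ ≤ max M 0 := le_trans (hM ε hεI) (le_max_left _ _)
            have := le_trans this (mul_le_mul_of_nonneg_right h2 (norm_nonneg _))
            linarith
    have hz : Tendsto (fun ε => max M 0 * ‖y ε - y 0‖ + ‖Rt ε (y 0) - Rt 0 (y 0)‖)
        (nhdsWithin 0 (Set.Ioo 0 ε₀)) (nhds 0) := by
      have h1 := tendsto_iff_norm_sub_tendsto_zero.mp hyconv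
      have h2 := tendsto_iff_norm_sub_tendsto_zero.mp (hRtconv (y 0))
      simpa using (h1.const_mul (max M 0)).add h2
    exact squeeze_zero' (Eventually.of_forall fun ε => norm_nonneg _) hb hz
  have heq0 : RL 0 x = Rt 0 (y 0) := hRL 0 ⟨le_refl _, hε₀⟩ x
  rw [heq0]
  apply key.congr'
  filter_upwards [self_mem_nhdsWithin] with ε hε
  exact (hRL ε ⟨hε.1.le, hε.2⟩ x).symm
end
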